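/- Let p(z) = a_n z^n + Σ_{ν=μ}^{n} a_{n-ν} z^{n-ν}, 1 ≤ μ ≤ n, be a polynomial of degree n with all zeros in |z| ≤ k, k ≤ 1. Then max_{|z|=1} |p'(z)| ≥ (n/(1+k^μ)) · ( max_{|z|=1} |p(z)| + k^{-(n-μ)} · min_{|z|=k} |p(z)| ). -/

import Mathlib

open Polynomial

noncomputable def maxMod (p : Polynomial ℂ) (c : ℝ) : ℝ :=
  sSup ((fun z => ‖p.eval z‖) '' {z : ℂ | ‖z‖ = c})

noncomputable def minMod (p : Polynomial ℂ) (c : ℝ) : ℝ :=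
  sInf ((fun z => ‖p.eval z‖) '' {z : ℂ | ‖z‖ = c})

noncomputable def polarDeriv (p : Polynomial ℂ) (α : ℂ) : Polynomial ℂ :=
  C (p.natDegree : ℂ) * p + (C α - X) * derivative p

/-!
Outside the disc |w| ≤ k containing the zeros, every zero r contributes a term of real part
at least 1/2 to w p'(w)/p(w) = Σ w/(w - r), whence |n p(w) - w p'(w)| ≤ |w p'(w)| there.
The vanishing coefficients make n p - X p' of degree at most n - μ, so after the reflection
w ↦ 1/w the quotient (n p - X p')/(X p') has a zero of order μ at the origin, and the maximum
modulus principle upgrades the inequality to |n p(z) - z p'(z)| ≤ k^μ |p'(z)| on |z| = 1.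
With m = min_{|w|=k} |p(w)|, the minimum principle gives |p(w)| ≥ m (|w|/k)^n for |w| ≥ k, so
every p - b X^n with |b| < m/k^n still has its zeros in the disc; it has the same n p - X p',
and a suitable argument of b lowers |p'(z)| by up to n m/k^n, which sharpens the bound to
|n p(z) - z p'(z)| ≤ k^μ (|p'(z)| - n m/k^n). The triangle inequality at a point where |p| is
maximal on the unit circle finishes the proof.
-/

namespace Complex

theorem half_le_re_div_sub {w r : ℂ} (hr : ‖r‖ ≤ ‖w‖) (hwr : w ≠ r) :
    1 / 2 ≤ (w / (w - r)).re := by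
  have hpos : 0 < normSq (w - r) := normSq_pos.mpr (sub_ne_zero.mpr hwr)
  have hsq : r.re ^ 2 + r.im ^ 2 ≤ w.re ^ 2 + w.im ^ 2 := by
    have := pow_le_pow_left₀ (norm_nonneg r) hr 2
    rwa [← normSq_eq_norm_sq, ← normSq_eq_norm_sq, normSq_apply, normSq_apply, ← sq, ← sq,
      ← sq, ← sq] at this
  rw [div_re, ← add_div, le_div_iff₀ hpos, normSq_apply]
  simp only [sub_re, sub_im]
  nlinarith

theorem norm_mul_sub_le_of_le_re_div {a b : ℂ} {c : ℝ} (hc : 0 ≤ c) (ha : a ≠ 0)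
    (h : c / 2 ≤ (b / a).re) : ‖c * a - b‖ ≤ ‖b‖ := by
  set u := b / a
  have hb : b = u * a := (div_mul_cancel₀ b ha).symm
  suffices ‖(c : ℂ) - u‖ ≤ ‖u‖ by
    rw [hb, ← sub_mul, norm_mul, norm_mul]
    exact mul_le_mul_of_nonneg_right this (norm_nonneg a)
  rw [← sq_le_sq₀ (norm_nonneg _) (norm_nonneg _), ← normSq_eq_norm_sq, ← normSq_eq_norm_sq,
    normSq_apply, normSq_apply]
  simp only [sub_re, sub_im, ofReal_re, ofReal_im]
  nlinarith

end Complex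

theorem le_of_forall_one_lt_smul {E : Type*} [TopologicalSpace E] [MulAction ℝ E]
    [ContinuousSMul ℝ E] {f g : E → ℝ} (hf : Continuous f) (hg : Continuous g) (z : E)
    (h : ∀ ρ : ℝ, 1 < ρ → f (ρ • z) ≤ g (ρ • z)) : f z ≤ g z := by
  have hρ : Filter.Tendsto (fun ρ : ℝ ↦ ρ • z) (nhdsWithin 1 (Set.Ioi 1)) (nhds z) := by
    have hc : Continuous fun ρ : ℝ ↦ ρ • z := by fun_prop
    exact (hc.tendsto' 1 z (one_smul ℝ z)).mono_left nhdsWithin_le_nhds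
  exact le_of_tendsto_of_tendsto ((hf.tendsto z).comp hρ) ((hg.tendsto z).comp hρ)
    (eventually_nhdsWithin_of_forall h)

theorem le_norm_sub_of_forall_norm_lt {E : Type*} [NormedAddCommGroup E] [NormedSpace ℝ E]
    {a : E} {r x : ℝ} (hr : 0 < r) (ha : r ≤ ‖a‖) (h : ∀ v : E, ‖v‖ < r → x ≤ ‖a - v‖) :
    x ≤ ‖a‖ - r := by
  have ha0 : 0 < ‖a‖ := hr.trans_le ha
  refine le_of_forall_pos_le_add fun ε hε ↦ ?_
  set s := max 0 (r - ε)
  have hsr : s < r := max_lt hr (by linarith)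
  have hsa : s / ‖a‖ ≤ 1 := (div_le_one ha0).mpr (by linarith)
  have hv : ‖(s / ‖a‖) • a‖ = s := by
    rw [norm_smul, Real.norm_of_nonneg (by positivity), div_mul_cancel₀ _ ha0.ne']
  have hav : ‖a - (s / ‖a‖) • a‖ = ‖a‖ - s := by
    rw [show a - (s / ‖a‖) • a = (1 - s / ‖a‖) • a by rw [sub_smul, one_smul], norm_smul,
      Real.norm_of_nonneg (sub_nonneg.mpr hsa), sub_mul, one_mul, div_mul_cancel₀ _ ha0.ne']
  have := h _ (hv ▸ hsr)
  rw [hav] at this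
  linarith [le_max_right 0 (r - ε)]

namespace Polynomial

theorem natDegree_div_two_le_re {p : ℂ[X]} {w : ℂ} (hroots : ∀ r, p.IsRoot r → ‖r‖ ≤ ‖w‖)
    (hw : p.eval w ≠ 0) : (p.natDegree : ℝ) / 2 ≤ (w * p.derivative.eval w / p.eval w).re := by
  have hsum : w * p.derivative.eval w / p.eval w = (p.roots.map fun r ↦ w / (w - r)).sum := by
    rw [mul_div_assoc, (IsAlgClosed.splits p).eval_derivative_div_eval_of_ne_zero hw,
      ← Multiset.sum_map_mul_left]
    simp only [mul_one_div]
  have hre : ∀ x ∈ p.roots.map fun r ↦ (w / (w - r)).re, 1 / 2 ≤ x := by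
    simp only [Multiset.mem_map, mem_roots', forall_exists_index, and_imp]
    rintro _ r - hr rfl
    exact Complex.half_le_re_div_sub (hroots r hr) (by rintro rfl; exact hw hr)
  have := Multiset.card_nsmul_le_sum hre
  rw [Multiset.card_map, IsAlgClosed.card_roots_eq_natDegree, nsmul_eq_mul] at this
  have hre_sum := map_multiset_sum Complex.reAddGroupHom (p.roots.map fun r ↦ w / (w - r))
  rw [Complex.coe_reAddGroupHom, Multiset.map_map, Function.comp_def] at hre_sum
  rw [hsum, hre_sum]
  linarith

theorem eval_derivative_ne_zero_of_lt_norm {p : ℂ[X]} (hp : 0 < p.degree) {k : ℝ}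
    (hroots : ∀ r, p.IsRoot r → ‖r‖ ≤ k) {w : ℂ} (hw : k < ‖w‖) : p.derivative.eval w ≠ 0 := by
  intro h
  have hsub : p.rootSet ℂ ⊆ Metric.closedBall 0 k := fun r hr ↦ by
    rw [mem_rootSet, coe_aeval_eq_eval] at hr
    simpa using hroots r hr.2
  have hw' : w ∈ p.derivative.rootSet ℂ := by
    rw [mem_rootSet, coe_aeval_eq_eval]
    refine ⟨fun h0 ↦ ?_, h⟩
    exact hp.not_ge (natDegree_eq_zero_iff_degree_le_zero.mp (derivative_eq_zero.mp h0))
  have := (convexHull_min hsub (convex_closedBall 0 k))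
    (rootSet_derivative_subset_convexHull_rootSet hp hw')
  exact hw.not_ge (mem_closedBall_zero_iff.mp this)

theorem eval_polarDeriv_zero (p : ℂ[X]) (w : ℂ) :
    (polarDeriv p 0).eval w = p.natDegree * p.eval w - w * p.derivative.eval w := by
  simp [polarDeriv]
  ring

theorem norm_eval_polarDeriv_zero_le {p : ℂ[X]} {w : ℂ} (hroots : ∀ r, p.IsRoot r → ‖r‖ ≤ ‖w‖)
    (hw : p.eval w ≠ 0) : ‖(polarDeriv p 0).eval w‖ ≤ ‖w * p.derivative.eval w‖ := by
  rw [eval_polarDeriv_zero]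
  exact Complex.norm_mul_sub_le_of_le_re_div (Nat.cast_nonneg _) hw
    (natDegree_div_two_le_re hroots hw)

theorem eval_reflect_inv_mul_pow {K : Type*} [Field K] {f : K[X]} {N : ℕ} (hf : f.natDegree ≤ N)
    {x : K} (hx : x ≠ 0) : (reflect N f).eval x⁻¹ * x ^ N = f.eval x := by
  let := invertibleOfNonzero hx
  have := eval₂_reflect_mul_pow (RingHom.id K) x N f hf
  rwa [invOf_eq_inv, eval₂_id, eval₂_id] at this

theorem X_pow_dvd_reflect {R : Type*} [Semiring R] {f : R[X]} {N μ : ℕ}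
    (hf : f.natDegree + μ ≤ N) : X ^ μ ∣ reflect N f := by
  refine X_pow_dvd_iff.mpr fun d hd ↦ ?_
  rw [coeff_reflect, revAt_le (by omega)]
  exact coeff_eq_zero_of_natDegree_lt (by omega)

theorem norm_eval_le_mul_of_forall_norm_eq {B G : ℂ[X]} {r c : ℝ} (hr : 0 < r)
    (hG : ∀ t, ‖t‖ ≤ r → G.eval t ≠ 0) (h : ∀ t, ‖t‖ = r → ‖B.eval t‖ ≤ c * ‖G.eval t‖)
    {t : ℂ} (ht : ‖t‖ ≤ r) : ‖B.eval t‖ ≤ c * ‖G.eval t‖ := by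
  have hG' : ∀ t ∈ Metric.closedBall (0 : ℂ) r, G.eval t ≠ 0 := fun t ht ↦ hG t (by simpa using ht)
  have hd : DiffContOnCl ℂ (fun t ↦ B.eval t / G.eval t) (Metric.ball 0 r) := by
    refine DifferentiableOn.diffContOnCl ?_
    rw [closure_ball 0 hr.ne']
    exact B.differentiable.differentiableOn.div G.differentiable.differentiableOn hG'
  have := Complex.norm_le_of_forall_mem_frontier_norm_le Metric.isBounded_ball hd (C := c)
    (fun t ht ↦ ?_) (z := t) (by rw [closure_ball 0 hr.ne']; simpa using ht)
  · rwa [norm_div, div_le_iff₀ (norm_pos_iff.mpr (hG t ht))] at this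
  · rw [frontier_ball 0 hr.ne', mem_sphere_zero_iff_norm] at ht
    rw [norm_div, div_le_iff₀ (norm_pos_iff.mpr (hG t ht.le))]
    exact h t ht

theorem norm_eval_le_pow_mul_norm_eval_reflect {D E B : ℂ[X]} {n μ : ℕ} {k : ℝ} (hk : 0 < k)
    (hEn : E.natDegree = n) (hDn : D.natDegree + μ ≤ n) (hB : reflect n D = X ^ μ * B)
    (hE : ∀ w, k ≤ ‖w‖ → E.eval w ≠ 0) (hDE : ∀ w, ‖w‖ = k → ‖D.eval w‖ ≤ ‖E.eval w‖)
    {t : ℂ} (ht : ‖t‖ ≤ k⁻¹) : ‖B.eval t‖ ≤ k ^ μ * ‖(reflect n E).eval t‖ := by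
  have hE0 : E ≠ 0 := fun h ↦ hE k (by simp [abs_of_pos hk]) (by simp [h])
  have hG : ∀ t : ℂ, ‖t‖ ≤ k⁻¹ → (reflect n E).eval t ≠ 0 := by
    intro t ht
    rcases eq_or_ne t 0 with rfl | ht0
    · rw [← coeff_zero_eq_eval_zero, coeff_reflect, revAt_le (Nat.zero_le n), Nat.sub_zero,
        ← hEn]
      exact leadingCoeff_ne_zero.mpr hE0
    · have hw : k ≤ ‖t⁻¹‖ := by
        rw [norm_inv]; exact (le_inv_comm₀ (norm_pos_iff.mpr ht0) hk).mp ht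
      have := hE t⁻¹ hw
      rw [← eval_reflect_inv_mul_pow hEn.le (inv_ne_zero ht0), inv_inv] at this
      exact left_ne_zero_of_mul this
  refine norm_eval_le_mul_of_forall_norm_eq (inv_pos.mpr hk) hG (fun t ht ↦ ?_) ht
  have ht0 : t ≠ 0 := by rintro rfl; simp at ht; exact hk.ne ht
  have hw : ‖t⁻¹‖ = k := by rw [norm_inv, ht, inv_inv]
  have := hDE t⁻¹ hw
  rw [← eval_reflect_inv_mul_pow (by omega : D.natDegree ≤ n) (inv_ne_zero ht0),
    ← eval_reflect_inv_mul_pow hEn.le (inv_ne_zero ht0), hB] at this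
  simp only [inv_inv, eval_mul, eval_pow, eval_X, norm_mul, norm_pow, hw, ht] at this
  rw [inv_pow] at this
  exact (inv_mul_le_iff₀ (by positivity)).mp (le_of_mul_le_mul_right this (pow_pos hk n))

/-- The maximum modulus principle for `D / E` on the exterior `k ≤ ‖w‖`, a disc around `∞`;
the first conjunct is the inequality at `w = ∞`. -/
theorem pow_mul_norm_eval_le_of_forall_norm_eq {D E : ℂ[X]} {n μ : ℕ} {k : ℝ} (hk : 0 < k)
    (hEn : E.natDegree = n) (hDn : D.natDegree + μ ≤ n) (hE : ∀ w, k ≤ ‖w‖ → E.eval w ≠ 0)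
    (hDE : ∀ w, ‖w‖ = k → ‖D.eval w‖ ≤ ‖E.eval w‖) :
    ‖D.coeff (n - μ)‖ ≤ k ^ μ * ‖E.coeff n‖ ∧
      ∀ w, k ≤ ‖w‖ → ‖w‖ ^ μ * ‖D.eval w‖ ≤ k ^ μ * ‖E.eval w‖ := by
  obtain ⟨B, hB⟩ := X_pow_dvd_reflect hDn
  have hball := fun t ↦ norm_eval_le_pow_mul_norm_eval_reflect (t := t) hk hEn hDn hB hE hDE
  refine ⟨?_, fun w hw ↦ ?_⟩
  · have hB0 : B.eval 0 = D.coeff (n - μ) := by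
      rw [← coeff_zero_eq_eval_zero, ← revAt_le (by omega : μ ≤ n), ← coeff_reflect, hB]
      simp [coeff_X_pow_mul']
    have := hball 0 (by simp [hk.le])
    rwa [hB0, ← coeff_zero_eq_eval_zero, coeff_reflect, revAt_le (Nat.zero_le n),
      Nat.sub_zero] at this
  · have hw0 : w ≠ 0 := by rintro rfl; simp at hw; linarith
    have := mul_le_mul_of_nonneg_right (hball w⁻¹ (by rw [norm_inv]; exact inv_anti₀ hk hw))
      (pow_nonneg (norm_nonneg w) n)
    rw [← eval_reflect_inv_mul_pow (by omega : D.natDegree ≤ n) hw0,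
      ← eval_reflect_inv_mul_pow hEn.le hw0, hB]
    simp only [eval_mul, eval_pow, eval_X, norm_mul, norm_pow, norm_inv]
    have hμ : ‖w‖ ^ μ * ‖w‖⁻¹ ^ μ = 1 := by
      rw [← mul_pow, mul_inv_cancel₀ (norm_ne_zero_iff.mpr hw0), one_pow]
    calc _ = ‖B.eval w⁻¹‖ * ‖w‖ ^ n := by linear_combination (‖B.eval w⁻¹‖ * ‖w‖ ^ n) * hμ
      _ ≤ _ := this
      _ = _ := by ring

theorem coeff_polarDeriv_zero (p : ℂ[X]) (j : ℕ) :
    (polarDeriv p 0).coeff j = (p.natDegree - j) * p.coeff j := by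
  rcases j with _ | j
  · simp [polarDeriv]
  · simp [polarDeriv, sub_mul, coeff_X_mul, coeff_derivative]
    ring

theorem natDegree_polarDeriv_zero_add_le {p : ℂ[X]} {n μ : ℕ} (hn : p.natDegree = n)
    (hμn : μ ≤ n) (hgap : ∀ ν : ℕ, 1 ≤ ν → ν < μ → p.coeff (n - ν) = 0) :
    (polarDeriv p 0).natDegree + μ ≤ n := by
  suffices (polarDeriv p 0).natDegree ≤ n - μ by omega
  refine natDegree_le_iff_coeff_eq_zero.mpr fun j hj ↦ ?_
  rw [coeff_polarDeriv_zero, hn]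
  rcases lt_trichotomy j n with hjn | rfl | hjn
  · rw [← Nat.sub_sub_self hjn.le, hgap (n - j) (by omega) (by omega), mul_zero]
  · simp
  · rw [coeff_eq_zero_of_natDegree_lt (hn ▸ hjn), mul_zero]

theorem natDegree_sub_C_mul_X_pow {R : Type*} [Ring R] {p : R[X]} {n : ℕ} {b : R}
    (hn : p.natDegree = n) (hb : b ≠ p.leadingCoeff) : (p - C b * X ^ n).natDegree = n := by
  refine le_antisymm ((natDegree_sub_le _ _).trans (max_le hn.le (natDegree_C_mul_X_pow_le b n)))
    (le_natDegree_of_ne_zero ?_)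
  rw [coeff_sub, coeff_C_mul_X_pow, if_pos rfl, ← hn, sub_ne_zero]
  exact hb.symm

theorem X_mul_derivative_C_mul_X_pow {R : Type*} [CommSemiring R] (b : R) (n : ℕ) :
    X * derivative (C b * X ^ n) = C (n * b) * X ^ n := by
  rcases n with _ | n
  · simp
  · rw [derivative_C_mul_X_pow, Nat.add_sub_cancel, mul_left_comm, ← pow_succ', mul_comm b]

theorem polarDeriv_zero_sub_C_mul_X_pow {p : ℂ[X]} {n : ℕ} {b : ℂ} (hn : p.natDegree = n)
    (hQ : (p - C b * X ^ n).natDegree = n) : polarDeriv (p - C b * X ^ n) 0 = polarDeriv p 0 := by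
  ext j
  rw [coeff_polarDeriv_zero, coeff_polarDeriv_zero, hn, hQ, coeff_sub, coeff_C_mul_X_pow]
  split_ifs with hj
  · simp [hj]
  · rw [sub_zero]

theorem eval_mul_derivative_sub_C_mul_X_pow (p : ℂ[X]) (b : ℂ) (n : ℕ) (w : ℂ) :
    w * (derivative (p - C b * X ^ n)).eval w = w * p.derivative.eval w - n * b * w ^ n := by
  have := congrArg (eval w) (X_mul_derivative_C_mul_X_pow b n)
  simp only [eval_mul, eval_X, eval_C, eval_pow] at this
  rw [derivative_sub, eval_sub, mul_sub, this]

section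

variable {p : ℂ[X]} {n μ : ℕ} {k c : ℝ}

theorem pow_mul_norm_eval_polarDeriv_zero_le (hn : p.natDegree = n) (hn0 : 0 < n)
    (hμ : (polarDeriv p 0).natDegree + μ ≤ n) (hk : 0 < k) (hroots : ∀ r, p.IsRoot r → ‖r‖ ≤ k)
    {z : ℂ} (hz : k ≤ ‖z‖) :
    ‖z‖ ^ μ * ‖(polarDeriv p 0).eval z‖ ≤ k ^ μ * ‖z * p.derivative.eval z‖ := by
  have hp : 0 < p.degree := natDegree_pos_iff_degree_pos.mp (hn ▸ hn0)
  have hE : (X * derivative p).natDegree = n := by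
    rw [natDegree_X_mul (derivative_ne_zero.mpr (by omega)), natDegree_derivative]
    omega
  -- `X * p'` may vanish on `‖w‖ = k`: compare on the circle `‖w‖ = ρ * k` and let `ρ → 1`.
  refine le_of_forall_one_lt_smul (f := fun w ↦ ‖z‖ ^ μ * ‖(polarDeriv p 0).eval w‖)
    (g := fun w ↦ k ^ μ * ‖w * p.derivative.eval w‖) (by fun_prop) (by fun_prop) z
    fun ρ hρ ↦ ?_
  have hρk : k < ρ * k := lt_mul_left hk hρ
  have hE0 : ∀ w : ℂ, ρ * k ≤ ‖w‖ → (X * derivative p).eval w ≠ 0 := fun w hw ↦ by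
    rw [eval_mul, eval_X]
    exact mul_ne_zero (by rintro rfl; simp at hw; linarith)
      (eval_derivative_ne_zero_of_lt_norm hp hroots (by linarith))
  have hDE : ∀ w : ℂ, ‖w‖ = ρ * k →
      ‖(polarDeriv p 0).eval w‖ ≤ ‖(X * derivative p).eval w‖ := fun w hw ↦ by
    rw [eval_mul, eval_X]
    exact norm_eval_polarDeriv_zero_le (fun r hr ↦ (hroots r hr).trans (by linarith))
      (fun h0 ↦ by linarith [hroots w h0])
  have := (pow_mul_norm_eval_le_of_forall_norm_eq (by positivity) hE hμ hE0 hDE).2 (ρ • z)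
    (by rw [norm_smul, Real.norm_of_nonneg (by positivity)]; gcongr)
  rw [norm_smul, Real.norm_of_nonneg (by positivity), mul_pow, mul_pow, mul_assoc, mul_assoc,
    eval_mul, eval_X] at this
  exact le_of_mul_le_mul_left this (by positivity)

theorem le_norm_leadingCoeff_and_mul_pow_le_norm_eval (hn : p.natDegree = n) (hk : 0 < k)
    (hroots : ∀ r, p.IsRoot r → ‖r‖ ≤ k) (hc0 : 0 < c)
    (hc : ∀ w, ‖w‖ = k → c * k ^ n ≤ ‖p.eval w‖) :
    c ≤ ‖p.leadingCoeff‖ ∧ ∀ w, k ≤ ‖w‖ → c * ‖w‖ ^ n ≤ ‖p.eval w‖ := by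
  have hp0 : ∀ w, k ≤ ‖w‖ → p.eval w ≠ 0 := fun w hw h0 ↦ by
    rcases hw.eq_or_lt with hw | hw
    · have := hc w hw.symm
      rw [h0, norm_zero] at this
      exact (mul_pos hc0 (pow_pos hk n)).not_ge this
    · exact hw.not_ge (hroots w h0)
  have hck : ‖((c * k ^ n : ℝ) : ℂ)‖ = c * k ^ n := by
    rw [Complex.norm_real, Real.norm_of_nonneg (by positivity)]
  obtain ⟨hlead, hext⟩ := pow_mul_norm_eval_le_of_forall_norm_eq (D := C ((c * k ^ n : ℝ) : ℂ))
    (μ := n) hk hn (by rw [natDegree_C, zero_add]) hp0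
    (fun w hw ↦ by rw [eval_C, hck]; exact hc w hw)
  refine ⟨?_, fun w hw ↦ ?_⟩
  · rw [Nat.sub_self, coeff_C_zero, hck, ← hn, coeff_natDegree, mul_comm c] at hlead
    exact le_of_mul_le_mul_left hlead (pow_pos hk _)
  · have := hext w hw
    rw [eval_C, hck] at this
    exact le_of_mul_le_mul_left (by linarith) (pow_pos hk n)

theorem norm_lt_of_isRoot_sub_C_mul_X_pow {b : ℂ} (hk : 0 < k)
    (hp : ∀ w, k ≤ ‖w‖ → c * ‖w‖ ^ n ≤ ‖p.eval w‖) (hb : ‖b‖ < c) {r : ℂ}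
    (hr : (p - C b * X ^ n).IsRoot r) : ‖r‖ < k := by
  by_contra! hkr
  have hpr : p.eval r = b * r ^ n := by
    simpa [sub_eq_zero] using hr
  have := hp r hkr
  rw [hpr, norm_mul, norm_pow] at this
  exact (mul_lt_mul_of_pos_right hb (pow_pos (hk.trans_le hkr) n)).not_ge this

theorem natDegree_sub_C_mul_X_pow_eq_and_norm_root_le {b : ℂ} (hn : p.natDegree = n)
    (hk : 0 < k) (hroots : ∀ r, p.IsRoot r → ‖r‖ ≤ k)
    (hc : ∀ w, ‖w‖ = k → c * k ^ n ≤ ‖p.eval w‖) (hb : ‖b‖ < c) :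
    (p - C b * X ^ n).natDegree = n ∧ ∀ r, (p - C b * X ^ n).IsRoot r → ‖r‖ ≤ k := by
  obtain ⟨hlead, hext⟩ :=
    le_norm_leadingCoeff_and_mul_pow_le_norm_eval hn hk hroots ((norm_nonneg b).trans_lt hb) hc
  exact ⟨natDegree_sub_C_mul_X_pow hn fun h ↦ by rw [h] at hb; linarith,
    fun r hr ↦ (norm_lt_of_isRoot_sub_C_mul_X_pow hk hext hb hr).le⟩

theorem mul_pow_le_norm_mul_eval_derivative (hn : p.natDegree = n) (hn0 : 0 < n)
    (hk : 0 < k) (hroots : ∀ r, p.IsRoot r → ‖r‖ ≤ k)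
    (hc : ∀ w, ‖w‖ = k → c * k ^ n ≤ ‖p.eval w‖) {z : ℂ} (hz : k ≤ ‖z‖) :
    n * c * ‖z‖ ^ n ≤ ‖z * p.derivative.eval z‖ := by
  have hout : ∀ w : ℂ, k < ‖w‖ → n * c * ‖w‖ ^ n ≤ ‖w * p.derivative.eval w‖ := by
    intro w hw
    by_contra! hlt
    -- otherwise some `p - b * X ^ n` with `‖b‖ < c` has a critical point at `w`,
    -- outside the disc containing its zeros
    have hw0 : w ≠ 0 := by rintro rfl; simp at hw; linarith
    have hnw : (n : ℂ) * w ^ n ≠ 0 := mul_ne_zero (by exact_mod_cast hn0.ne') (pow_ne_zero n hw0)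
    set b := w * p.derivative.eval w / (n * w ^ n)
    have hb : ‖b‖ < c := by
      rw [norm_div, div_lt_iff₀ (norm_pos_iff.mpr hnw)]
      simpa [mul_comm c, mul_assoc] using hlt
    obtain ⟨hQn, hQroots⟩ := natDegree_sub_C_mul_X_pow_eq_and_norm_root_le hn hk hroots hc hb
    have hQ' : (derivative (p - C b * X ^ n)).eval w = 0 := by
      have := eval_mul_derivative_sub_C_mul_X_pow p b n w
      rw [show (n : ℂ) * b * w ^ n = w * p.derivative.eval w by
        rw [mul_right_comm, mul_comm, div_mul_cancel₀ _ hnw], sub_self] at this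
      exact (mul_eq_zero.mp this).resolve_left hw0
    exact eval_derivative_ne_zero_of_lt_norm (natDegree_pos_iff_degree_pos.mp (by omega))
      hQroots hw hQ'
  refine le_of_forall_one_lt_smul (f := fun w ↦ n * c * ‖w‖ ^ n)
    (g := fun w ↦ ‖w * p.derivative.eval w‖) (by fun_prop) (by fun_prop) z fun ρ hρ ↦ hout _ ?_
  rw [norm_smul, Real.norm_of_nonneg (by positivity)]
  exact hz.trans_lt (lt_mul_left (hk.trans_le hz) hρ)

theorem pow_mul_norm_eval_polarDeriv_zero_le_sub (hn : p.natDegree = n) (hn0 : 0 < n)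
    (hμ : (polarDeriv p 0).natDegree + μ ≤ n) (hk : 0 < k) (hroots : ∀ r, p.IsRoot r → ‖r‖ ≤ k)
    (hc0 : 0 ≤ c) (hc : ∀ w, ‖w‖ = k → c * k ^ n ≤ ‖p.eval w‖) {z : ℂ} (hz : k ≤ ‖z‖) :
    ‖z‖ ^ μ * ‖(polarDeriv p 0).eval z‖ ≤
      k ^ μ * (‖z * p.derivative.eval z‖ - n * c * ‖z‖ ^ n) := by
  rcases hc0.eq_or_lt with rfl | hc0
  · simpa using pow_mul_norm_eval_polarDeriv_zero_le hn hn0 hμ hk hroots hz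
  have hz0 : z ≠ 0 := by rintro rfl; simp at hz; linarith
  have hnz : (n : ℂ) * z ^ n ≠ 0 := mul_ne_zero (by exact_mod_cast hn0.ne') (pow_ne_zero n hz0)
  rw [← div_le_iff₀' (by positivity)]
  refine le_norm_sub_of_forall_norm_lt (by positivity)
    (mul_pow_le_norm_mul_eval_derivative hn hn0 hk hroots hc hz)
    fun v hv ↦ ?_
  set b := v / (n * z ^ n)
  have hb : ‖b‖ < c := by
    rw [norm_div, div_lt_iff₀ (norm_pos_iff.mpr hnz)]
    simpa [mul_comm c, mul_assoc] using hv
  obtain ⟨hQn, hQroots⟩ := natDegree_sub_C_mul_X_pow_eq_and_norm_root_le hn hk hroots hc hb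
  have hQD := polarDeriv_zero_sub_C_mul_X_pow hn hQn
  have := pow_mul_norm_eval_polarDeriv_zero_le hQn hn0 (hQD ▸ hμ) hk hQroots hz
  rw [hQD, eval_mul_derivative_sub_C_mul_X_pow,
    show (n : ℂ) * b * z ^ n = v by rw [mul_right_comm, mul_comm, div_mul_cancel₀ _ hnz]] at this
  rwa [div_le_iff₀' (by positivity)]

end

end Polynomial

theorem setOf_norm_eq_sphere (c : ℝ) : {z : ℂ | ‖z‖ = c} = Metric.sphere 0 c := by
  ext
  simp

theorem exists_norm_eq_maxMod (p : ℂ[X]) {c : ℝ} (hc : 0 ≤ c) :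
    ∃ z : ℂ, ‖z‖ = c ∧ ‖p.eval z‖ = maxMod p c := by
  have hK := (isCompact_sphere (0 : ℂ) c).image (continuous_norm.comp p.continuous)
  rw [← setOf_norm_eq_sphere] at hK
  exact hK.sSup_mem ⟨_, (c : ℂ), by simp [hc], rfl⟩

theorem norm_eval_le_maxMod (p : ℂ[X]) {z : ℂ} {c : ℝ} (hz : ‖z‖ = c) :
    ‖p.eval z‖ ≤ maxMod p c := by
  have hK := (isCompact_sphere (0 : ℂ) c).image (continuous_norm.comp p.continuous)
  rw [← setOf_norm_eq_sphere] at hK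
  exact le_csSup hK.bddAbove ⟨z, hz, rfl⟩

theorem minMod_nonneg (p : ℂ[X]) (c : ℝ) : 0 ≤ minMod p c :=
  Real.sInf_nonneg (by rintro _ ⟨z, -, rfl⟩; exact norm_nonneg _)

theorem minMod_le_norm_eval (p : ℂ[X]) {z : ℂ} {c : ℝ} (hz : ‖z‖ = c) :
    minMod p c ≤ ‖p.eval z‖ :=
  csInf_le ⟨0, by rintro _ ⟨w, -, rfl⟩; exact norm_nonneg _⟩ ⟨z, hz, rfl⟩

theorem stmt7 (p : Polynomial ℂ) (n μ : ℕ) (hn : p.natDegree = n)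
    (hμ1 : 1 ≤ μ) (hμn : μ ≤ n)
    (hcoeff : ∀ ν : ℕ, 1 ≤ ν → ν < μ → p.coeff (n - ν) = 0)
    (k : ℝ) (hk0 : 0 < k) (hk : k ≤ 1)
    (hz : ∀ z : ℂ, p.IsRoot z → ‖z‖ ≤ k) :
    (n / (1 + k ^ μ)) * (maxMod p 1 + (k ^ (n - μ))⁻¹ * minMod p k) ≤ maxMod (derivative p) 1 := by
  obtain ⟨z₀, hz₀, hmax⟩ := exists_norm_eq_maxMod p zero_le_one
  set m := minMod p k
  have hm : ∀ w : ℂ, ‖w‖ = k → m / k ^ n * k ^ n ≤ ‖p.eval w‖ := fun w hw ↦ by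
    rw [div_mul_cancel₀ _ (pow_ne_zero n hk0.ne')]
    exact minMod_le_norm_eval p hw
  have hD := pow_mul_norm_eval_polarDeriv_zero_le_sub hn (by omega)
    (natDegree_polarDeriv_zero_add_le hn hμn hcoeff) hk0 hz
    (by have := minMod_nonneg p k; positivity) hm (hz₀ ▸ hk)
  rw [hz₀, one_pow, one_mul, norm_mul, hz₀, one_mul, one_pow, mul_one] at hD
  have htri : n * ‖p.eval z₀‖ ≤ ‖(polarDeriv p 0).eval z₀‖ + ‖p.derivative.eval z₀‖ := by
    calc n * ‖p.eval z₀‖ = ‖(polarDeriv p 0).eval z₀ + z₀ * p.derivative.eval z₀‖ := by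
          rw [eval_polarDeriv_zero, sub_add_cancel, norm_mul, hn, Complex.norm_natCast]
      _ ≤ _ := norm_add_le _ _
      _ = _ := by rw [norm_mul, hz₀, one_mul]
  have hderiv := norm_eval_le_maxMod p.derivative hz₀
  have hterm : k ^ μ * (m / k ^ n) = (k ^ (n - μ))⁻¹ * m := by
    rw [← Nat.sub_add_cancel hμn, pow_add, Nat.add_sub_cancel]
    field_simp
  rw [div_mul_eq_mul_div, div_le_iff₀ (by positivity)]
  nlinarith [mul_le_mul_of_nonneg_left hderiv (by positivity : (0 : ℝ) ≤ 1 + k ^ μ)]
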